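/- Let K be a nonempty closed convex subset of a uniformly convex real Banach space E with a partial order ≤ induced by a closed convex cone P, and let T : K → K be a monotone α-nonexpansive mapping for some α < 1. Assume x₀ ∈ K satisfies 0 ≤ x₀ ≤ Tx₀ and the orbit O(x₀) = {Tⁿx₀ : n = 0, 1, 2, ...} is bounded in norm. If the norm is monotonic (‖x‖ ≤ ‖y‖ whenever 0 ≤ x ≤ y), then the sequence Tⁿx₀ converges strongly (in norm) to a fixed point z of T with x₀ ≤ z. -/

import Mathlib

/-!
The Picard iterates `xₙ = Tⁿ x₀` increase in the cone order, so by monotonicity of the norm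
`‖xₙ‖` increases to some `L`. Uniform convexity makes the sequence Cauchy: if `xₘ ≤ xₙ` are far
apart, their midpoint has norm bounded away from `L`, yet it dominates `xₘ`, whose norm is close
to `L`. The limit `z` dominates every `xₙ` because `P` is closed, so the α-nonexpansive inequality
applies to the pairs `xₙ ≤ z`; letting `n → ∞` gives `‖z - T z‖² ≤ α ‖z - T z‖²`, and `α < 1`
forces `T z = z`.
-/

open Filter Topology

/-- A closed convex cone in a real normed space: nonempty, closed, not `{0}`,
pointed (`P ∩ (−P) = {0}`), and closed under nonnegative linear combinations. -/
def IsClosedConvexCone {E : Type*} [NormedAddCommGroup E] [NormedSpace ℝ E]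
    (P : Set E) : Prop :=
  P.Nonempty ∧ IsClosed P ∧ P ≠ {0} ∧ P ∩ (-P) = {0} ∧
    ∀ x ∈ P, ∀ y ∈ P, ∀ a b : ℝ, 0 ≤ a → 0 ≤ b → a • x + b • y ∈ P

/-- Weak convergence of a sequence: `f (x n) → f l` for every continuous
linear functional `f`. -/
def WeakConv {E : Type*} [NormedAddCommGroup E] [NormedSpace ℝ E]
    (x : ℕ → E) (l : E) : Prop :=
  ∀ f : E →L[ℝ] ℝ, Tendsto (fun n => f (x n)) atTop (𝓝 (f l))

/-- `T` is monotone (w.r.t. the order `x ≤ y ↔ y - x ∈ P`) and α-nonexpansive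
on `K`. -/
def MonotoneAlphaNonexpansive {E : Type*} [NormedAddCommGroup E] [NormedSpace ℝ E]
    (P K : Set E) (T : E → E) (α : ℝ) : Prop :=
  (∀ x ∈ K, ∀ y ∈ K, y - x ∈ P → T y - T x ∈ P) ∧
    ∀ x ∈ K, ∀ y ∈ K, y - x ∈ P →
      ‖T x - T y‖ ^ 2 ≤ α * ‖T x - y‖ ^ 2 + α * ‖T y - x‖ ^ 2
        + (1 - 2 * α) * ‖x - y‖ ^ 2

section

variable {E : Type*} [NormedAddCommGroup E] [NormedSpace ℝ E] {P : Set E}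

namespace IsClosedConvexCone

variable (hP : IsClosedConvexCone P)
include hP

theorem zero_mem : (0 : E) ∈ P := by
  obtain ⟨⟨w, hw⟩, -, -, -, hcone⟩ := hP
  simpa using hcone w hw w hw 0 0 le_rfl le_rfl

theorem add_mem {x y : E} (hx : x ∈ P) (hy : y ∈ P) : x + y ∈ P := by
  simpa using hP.2.2.2.2 x hx y hy 1 1 zero_le_one zero_le_one

theorem smul_mem {a : ℝ} (ha : 0 ≤ a) {x : E} (hx : x ∈ P) : a • x ∈ P := by
  simpa using hP.2.2.2.2 x hx x hx a 0 ha le_rfl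

theorem sub_mem_of_le_of_succ_sub_mem {s : ℕ → E} (hs : ∀ n, s (n + 1) - s n ∈ P) {m n : ℕ}
    (hmn : m ≤ n) : s n - s m ∈ P := by
  induction n, hmn using Nat.le_induction with
  | base => simpa using hP.zero_mem
  | succ n _ ih => simpa using hP.add_mem (hs n) ih

theorem sub_mem_of_tendsto {s : ℕ → E} (hs : ∀ m n, m ≤ n → s n - s m ∈ P) {z : E}
    (hz : Tendsto s atTop (𝓝 z)) (n : ℕ) : z - s n ∈ P :=
  hP.2.1.mem_of_tendsto (hz.sub_const (s n)) ((eventually_ge_atTop n).mono (hs n))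

variable (hnorm : ∀ x y : E, x ∈ P → y - x ∈ P → ‖x‖ ≤ ‖y‖)
include hnorm

theorem norm_le_norm_midpoint {x y : E} (hx : x ∈ P) (hxy : y - x ∈ P) :
    ‖x‖ ≤ ‖(2⁻¹ : ℝ) • (x + y)‖ := by
  refine hnorm _ _ hx ?_
  rw [show (2⁻¹ : ℝ) • (x + y) - x = (2⁻¹ : ℝ) • (y - x) by module]
  exact hP.smul_mem (by norm_num) hxy

theorem exists_norm_sub_lt_of_le [UniformConvexSpace E] {ε : ℝ} (hε : 0 < ε) (L : ℝ) :
    ∃ δ > 0, ∀ ⦃x y : E⦄, x ∈ P → y - x ∈ P → ‖y‖ ≤ L → L - δ < ‖x‖ → ‖y - x‖ < ε := by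
  obtain ⟨δ, hδ, hconv⟩ := exists_forall_closed_ball_dist_add_le_two_mul_sub (E := E) hε L
  refine ⟨δ / 2, half_pos hδ, fun x y hx hxy hy hLx => ?_⟩
  by_contra! hfar
  have hsum : ‖x + y‖ ≤ 2 * L - δ :=
    hconv ((hnorm x y hx hxy).trans hy) hy (by rwa [norm_sub_rev])
  have hmid := hP.norm_le_norm_midpoint hnorm hx hxy
  rw [norm_smul, Real.norm_of_nonneg (by norm_num)] at hmid
  linarith

theorem cauchySeq_of_sub_mem [UniformConvexSpace E] {s : ℕ → E} (hsP : ∀ n, s n ∈ P)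
    (hs : ∀ m n, m ≤ n → s n - s m ∈ P) (hbdd : BddAbove (Set.range fun n => ‖s n‖)) :
    CauchySeq s := by
  have hmono : Monotone fun n => ‖s n‖ := fun m n hmn => hnorm _ _ (hsP m) (hs m n hmn)
  have hlim := tendsto_atTop_ciSup hmono hbdd
  refine Metric.cauchySeq_iff'.2 fun ε hε => ?_
  obtain ⟨δ, hδ, hclose⟩ := hP.exists_norm_sub_lt_of_le hnorm hε (⨆ n, ‖s n‖)
  obtain ⟨N, hN⟩ := (hlim.eventually (eventually_gt_nhds (sub_lt_self _ hδ))).exists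
  refine ⟨N, fun n hn => ?_⟩
  rw [dist_eq_norm]
  exact hclose (hsP N) (hs N n hn) (le_ciSup hbdd n) hN

end IsClosedConvexCone

namespace MonotoneAlphaNonexpansive

variable {K : Set E} {T : E → E} {α : ℝ}

theorem iterate_succ_sub_mem (hT : MonotoneAlphaNonexpansive P K T α)
    (hTK : Set.MapsTo T K K) {x₀ : E} (hx₀ : x₀ ∈ K) (hinc : T x₀ - x₀ ∈ P) (n : ℕ) :
    T^[n + 1] x₀ - T^[n] x₀ ∈ P := by
  induction n with
  | zero => simpa using hinc
  | succ n ih =>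
    rw [Function.iterate_succ_apply' T (n + 1), Function.iterate_succ_apply' T n] at *
    exact hT.1 _ (hTK.iterate n hx₀) _ (hTK (hTK.iterate n hx₀)) ih

theorem eq_of_tendsto (hT : MonotoneAlphaNonexpansive P K T α) (hα : α < 1) {s : ℕ → E} {z : E}
    (hsK : ∀ n, s n ∈ K) (hzK : z ∈ K) (hsz : ∀ n, z - s n ∈ P) (hs : Tendsto s atTop (𝓝 z))
    (hTs : Tendsto (fun n => T (s n)) atTop (𝓝 z)) : T z = z := by
  have hlhs : Tendsto (fun n => ‖T (s n) - T z‖ ^ 2) atTop (𝓝 (‖z - T z‖ ^ 2)) :=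
    (hTs.sub_const _).norm.pow 2
  have hrhs : Tendsto (fun n => α * ‖T (s n) - z‖ ^ 2 + α * ‖T z - s n‖ ^ 2
      + (1 - 2 * α) * ‖s n - z‖ ^ 2) atTop
      (𝓝 (α * ‖z - z‖ ^ 2 + α * ‖T z - z‖ ^ 2 + (1 - 2 * α) * ‖z - z‖ ^ 2)) :=
    ((((hTs.sub_const z).norm.pow 2).const_mul α).add
      (((tendsto_const_nhds.sub hs).norm.pow 2).const_mul α)).add
      (((hs.sub_const z).norm.pow 2).const_mul _)
  have hlim := le_of_tendsto_of_tendsto' hlhs hrhs fun n => hT.2 _ (hsK n) z hzK (hsz n)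
  rw [sub_self, norm_zero, norm_sub_rev (T z)] at hlim
  have hsq : (1 - α) * ‖z - T z‖ ^ 2 ≤ 0 := by linarith
  have hdist : ‖z - T z‖ ^ 2 = 0 :=
    le_antisymm (nonpos_of_mul_nonpos_right hsq (sub_pos.2 hα)) (sq_nonneg _)
  rw [sq_eq_zero_iff, norm_eq_zero, sub_eq_zero] at hdist
  exact hdist.symm

end MonotoneAlphaNonexpansive

end

theorem picard_strong_convergence_increasing_general
    {E : Type*} [NormedAddCommGroup E] [NormedSpace ℝ E]
    [UniformConvexSpace E] [CompleteSpace E]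
    (P : Set E) (hP : IsClosedConvexCone P)
    (K : Set E) (hKcl : IsClosed K)
    (T : E → E) (hTK : ∀ x ∈ K, T x ∈ K)
    (α : ℝ) (hα : α < 1)
    (hT : MonotoneAlphaNonexpansive P K T α)
    (x₀ : E) (hx₀ : x₀ ∈ K) (hpos : x₀ ∈ P) (hinc : T x₀ - x₀ ∈ P)
    (hbdd : ∃ M : ℝ, ∀ n : ℕ, ‖T^[n] x₀‖ ≤ M)
    (hnorm : ∀ x y : E, x ∈ P → y - x ∈ P → ‖x‖ ≤ ‖y‖) :
    ∃ z ∈ K, T z = z ∧ z - x₀ ∈ P ∧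
      Tendsto (fun n => T^[n] x₀) atTop (𝓝 z) := by
  have hsK : ∀ n, T^[n] x₀ ∈ K := fun n => Set.MapsTo.iterate hTK n hx₀
  have hle : ∀ m n, m ≤ n → T^[n] x₀ - T^[m] x₀ ∈ P := fun _ _ =>
    hP.sub_mem_of_le_of_succ_sub_mem (s := (T^[·] x₀)) (hT.iterate_succ_sub_mem hTK hx₀ hinc)
  have hsP : ∀ n, T^[n] x₀ ∈ P := fun n => by
    simpa using hP.add_mem hpos (hle 0 n n.zero_le)
  obtain ⟨M, hM⟩ := hbdd
  obtain ⟨z, hz⟩ := cauchySeq_tendsto_of_complete <|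
    hP.cauchySeq_of_sub_mem hnorm hsP hle ⟨M, Set.forall_mem_range.2 hM⟩
  have hzK : z ∈ K := hKcl.mem_of_tendsto hz (.of_forall hsK)
  have hzs := hP.sub_mem_of_tendsto hle hz
  have hTs : Tendsto (fun n => T (T^[n] x₀)) atTop (𝓝 z) := by
    simpa only [Function.comp_def, Function.iterate_succ_apply'] using
      hz.comp (tendsto_add_atTop_nat 1)
  exact ⟨z, hzK, hT.eq_of_tendsto hα hsK hzK hzs hz hTs, by simpa using hzs 0, hz⟩

/-- If `0 ≤ x₀ ≤ T x₀`, the orbit of `x₀` is norm-bounded and the norm is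
monotonic, then the Picard iterates converge strongly to a fixed point
`z ≥ x₀`. -/
theorem picard_strong_convergence_increasing
    {E : Type*} [NormedAddCommGroup E] [NormedSpace ℝ E]
    [UniformConvexSpace E] [CompleteSpace E]
    (P : Set E) (hP : IsClosedConvexCone P)
    (K : Set E) (hKne : K.Nonempty) (hKcl : IsClosed K) (hKco : Convex ℝ K)
    (T : E → E) (hTK : ∀ x ∈ K, T x ∈ K)
    (α : ℝ) (hα : α < 1)
    (hT : MonotoneAlphaNonexpansive P K T α)
    (x₀ : E) (hx₀ : x₀ ∈ K) (hpos : x₀ ∈ P) (hinc : T x₀ - x₀ ∈ P)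
    (hbdd : ∃ M : ℝ, ∀ n : ℕ, ‖T^[n] x₀‖ ≤ M)
    (hnorm : ∀ x y : E, x ∈ P → y - x ∈ P → ‖x‖ ≤ ‖y‖) :
    ∃ z ∈ K, T z = z ∧ z - x₀ ∈ P ∧
      Tendsto (fun n => T^[n] x₀) atTop (𝓝 z) :=
  picard_strong_convergence_increasing_general P hP K hKcl T hTK α hα hT x₀ hx₀ hpos hinc hbdd hnorm
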